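/- Let α ∈ (1,∞) and let p_{Y|X} be a channel with p_{Y|X}(y|x) > 0 for all x, y. Consider F̃_α^{LP}(p_X, q̃_{X,Y}, r_{X|Y}) as a function of a strictly positive distribution p_X on 𝒳, a strictly positive joint distribution q̃_{X,Y} on 𝒳×𝒴, and a reverse channel r_{X|Y}. Then: (1) for fixed (p_X, q̃_{X,Y}), F̃_α^{LP} is maximized over reverse channels by r*_{X|Y}(x|y) := q̃_{X,Y}(x,y)/Σ_{x'} q̃_{X,Y}(x',y); (2) for fixed (q̃_{X,Y}, r_{X|Y}) with r_{X|Y} strictly positive, F̃_α^{LP} is maximized over strictly positive distributions p_X by p*_X(x) := Σ_y q̃_{X,Y}(x,y); (3) for fixed (p_X, r_{X|Y}) with r_{X|Y} strictly positive, F̃_α^{LP} is maximized over strictly positive joint distributions q̃_{X,Y} by q̃*_{X,Y}(x,y) := q̂_X(x) q̂_{Y|X}(y|x), where q̂_{Y|X}(y|x) := p_{Y|X}(y|x) r_{X|Y}(x|y)^{1−1/α} / Σ_{y'} p_{Y|X}(y'|x) r_{X|Y}(x|y')^{1−1/α} and q̂_X(x) := p_X(x)^{α/(2α−1)} ( Σ_y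 p_{Y|X}(y|x) r_{X|Y}(x|y)^{1−1/α} )^{α/(2α−1)} / Σ_{x'} p_X(x')^{α/(2α−1)} ( Σ_y p_{Y|X}(y|x') r_{X|Y}(x'|y)^{1−1/α} )^{α/(2α−1)}. -/

import Mathlib

/-- A probability mass function on a finite type. -/
def IsPMF {Z : Type*} [Fintype Z] (q : Z → ℝ) : Prop :=
  (∀ z, 0 ≤ q z) ∧ ∑ z, q z = 1

/-- Kullback--Leibler divergence (natural log). -/
noncomputable def klD {Z : Type*} [Fintype Z] (p q : Z → ℝ) : ℝ :=
  ∑ z, p z * Real.log (p z / q z)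

/-- Extended-real logarithm: `elog 0 = ⊥` (i.e. `log 0 = −∞`). -/
noncomputable def elog (t : ℝ) : EReal :=
  if t = 0 then ⊥ else ((Real.log t : ℝ) : EReal)

/-- `F̃_α^{LP}(p_X, q̃_{X,Y}, r_{X|Y}) = (α/(1−α)) D(q̃_{X,Y} ‖ q̃_X p_{Y|X})
  + Σ_{x,y} q̃_{X,Y}(x,y) log(r(x|y)/q̃_X(x)) + (α/(1−α)) D(q̃_X ‖ p_X)`,
valued in `ℝ ∪ {−∞}` (as `EReal`). -/
noncomputable def FtildeLP {X Y : Type*} [Fintype X] [Fintype Y]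
    (α : ℝ) (pYX : X → Y → ℝ) (pX : X → ℝ) (qt : X × Y → ℝ) (r : Y → X → ℝ) : EReal :=
  (((α / (1 - α)) * klD qt (fun z : X × Y => (∑ y, qt (z.1, y)) * pYX z.1 z.2) : ℝ) : EReal)
  + ∑ z : X × Y, ((qt z : ℝ) : EReal) * elog (r z.2 z.1 / ∑ y, qt (z.1, y))
  + (((α / (1 - α)) * klD (fun x => ∑ y, qt (x, y)) pX : ℝ) : EReal)


/-!
Everything rests on the log-sum inequality `∑ q log (w / q) ≤ (∑ q) log (∑ w / ∑ q)`, a sum of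
instances of `log t ≤ t - 1`. For the reverse channel it is Gibbs' inequality for each `y`; for
`p_X` only the last divergence changes, and it vanishes at the marginal of `q̃`. For `q̃`, put
`β = α / (α - 1)`: the exponents satisfy `β (1 - 1/α) = 1` and `(β + 1) α / (2α - 1) = β`, which
make the integrand of `F̃` collapse, giving
`F̃ (q̃) = (β + 1) log Z - β D(q̃ ‖ q̂) - D(q̃_X ‖ q̂_X)` with `Z` the normaliser of `q̂_X`.
Both divergences are nonnegative and vanish at `q̃ = q̂`.
-/

open Real Finset

theorem EReal.coe_finset_sum {ι : Type*} (s : Finset ι) (f : ι → ℝ) :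
    ((∑ i ∈ s, f i : ℝ) : EReal) = ∑ i ∈ s, (f i : EReal) :=
  map_sum (⟨⟨Real.toEReal, EReal.coe_zero⟩, EReal.coe_add⟩ : ℝ →+ EReal) f s

section Finite

variable {Z : Type*} [Fintype Z]

theorem sum_mul_log_div_le {q w : Z → ℝ} (hq : ∀ z, 0 ≤ q z) (hw : ∀ z, 0 < w z) :
    ∑ z, q z * log (w z / q z) ≤ (∑ z, q z) * log ((∑ z, w z) / ∑ z, q z) := by
  rcases (sum_nonneg fun z _ => hq z).eq_or_lt with hQ | hQ
  · have hq0 : ∀ z, q z = 0 := fun z =>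
      (sum_eq_zero_iff_of_nonneg fun z _ => hq z).mp hQ.symm z (mem_univ z)
    simp [hq0]
  set Q := ∑ z, q z
  set W := ∑ z, w z
  have hW : 0 < W := sum_pos (fun z _ => hw z) (nonempty_of_sum_ne_zero hQ.ne')
  -- `log t ≤ t - 1` at `t = (w z / q z) / (W / Q)`
  have key : ∀ z, q z * log (w z / q z) ≤ q z * log (W / Q) + (w z * Q / W - q z) := by
    intro z
    rcases (hq z).eq_or_lt with h0 | hpos
    · rw [← h0]
      simp only [zero_mul, sub_zero, zero_add]
      exact (div_pos (mul_pos (hw z) hQ) hW).le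
    have hlog := log_le_sub_one_of_pos (div_pos (div_pos (hw z) hpos) (div_pos hW hQ))
    rw [log_div (div_pos (hw z) hpos).ne' (div_pos hW hQ).ne'] at hlog
    have hmul := mul_le_mul_of_nonneg_left hlog hpos.le
    rw [mul_sub, show q z * (w z / q z / (W / Q) - 1) = w z * Q / W - q z by field_simp] at hmul
    linarith
  calc ∑ z, q z * log (w z / q z)
      ≤ ∑ z, (q z * log (W / Q) + (w z * Q / W - q z)) := sum_le_sum fun z _ => key z
    _ = Q * log (W / Q) := by
      rw [sum_add_distrib, ← sum_mul, sum_sub_distrib, ← sum_div, ← sum_mul,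
        mul_div_cancel_left₀ Q hW.ne', sub_self, add_zero]

theorem klD_nonneg {p q : Z → ℝ} (hp : IsPMF p) (hq : IsPMF q) (hqpos : ∀ z, 0 < q z) :
    0 ≤ klD p q := by
  have h := sum_mul_log_div_le hp.1 hqpos
  rw [hq.2, hp.2, div_one, log_one, mul_zero] at h
  have e : klD p q = -∑ z, p z * log (q z / p z) := by
    simp only [klD, ← sum_neg_distrib, ← mul_neg, ← log_inv, inv_div]
  linarith

theorem klD_self (p : Z → ℝ) : klD p p = 0 :=
  sum_eq_zero fun z _ => by by_cases h : p z = 0 <;> simp [h]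

theorem sum_mul_log_le_sum_mul_log_div_sum [Nonempty Z] {q r : Z → ℝ} (hq : ∀ z, 0 < q z)
    (hr : IsPMF r) (hrpos : ∀ z, 0 < r z) :
    ∑ z, q z * log (r z) ≤ ∑ z, q z * log (q z / ∑ z', q z') := by
  have hQ : 0 < ∑ z, q z := sum_pos (fun z _ => hq z) univ_nonempty
  have h := sum_mul_log_div_le (fun z => (hq z).le) hrpos
  rw [hr.2, one_div, log_inv] at h
  simp only [log_div (hrpos _).ne' (hq _).ne', log_div (hq _).ne' hQ.ne', mul_sub,
    sum_sub_distrib, ← sum_mul] at h ⊢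
  linarith

theorem sum_coe_mul_elog (q : Z → ℝ) {t : Z → ℝ} (ht : ∀ z, t z ≠ 0) :
    ∑ z, (q z : EReal) * elog (t z) = ((∑ z, q z * log (t z) : ℝ) : EReal) := by
  simp only [elog, ht, if_false, ← EReal.coe_mul, EReal.coe_finset_sum]

theorem sum_coe_mul_elog_eq_bot {q t : Z → ℝ} {z₀ : Z} (hq : 0 < q z₀) (ht : t z₀ = 0) :
    ∑ z, (q z : EReal) * elog (t z) = ⊥ := by
  classical
  rw [← add_sum_erase _ _ (mem_univ z₀), elog, if_pos ht,
    EReal.mul_bot_of_pos (EReal.coe_pos.mpr hq), EReal.bot_add]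

end Finite

section Joint

variable {X Y : Type*} [Fintype X] [Fintype Y]

theorem sum_marginal_mul (q : X × Y → ℝ) (f : X → ℝ) :
    ∑ x, (∑ y, q (x, y)) * f x = ∑ z, q z * f z.1 := by
  simp only [Fintype.sum_prod_type, sum_mul]

theorem IsPMF.marginal {q : X × Y → ℝ} (hq : IsPMF q) : IsPMF fun x => ∑ y, q (x, y) :=
  ⟨fun x => sum_nonneg fun y _ => hq.1 (x, y), by rw [← hq.2, Fintype.sum_prod_type]⟩

theorem FtildeLP_le_posterior [Nonempty X] [Nonempty Y] (α : ℝ) (pYX : X → Y → ℝ)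
    (pX : X → ℝ) {qt : X × Y → ℝ} (hqt : ∀ z, 0 < qt z) {r : Y → X → ℝ}
    (hr : ∀ y, IsPMF (r y)) :
    FtildeLP α pYX pX qt r ≤ FtildeLP α pYX pX qt (fun y x => qt (x, y) / ∑ x', qt (x', y)) := by
  unfold FtildeLP
  refine add_le_add_left (add_le_add_right ?_ _) _
  by_cases hr0 : ∃ z : X × Y, r z.2 z.1 = 0
  · obtain ⟨z₀, hz₀⟩ := hr0
    rw [sum_coe_mul_elog_eq_bot (hqt z₀) (by rw [hz₀, zero_div])]
    exact bot_le
  push Not at hr0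
  have hrpos : ∀ y x, 0 < r y x := fun y x => ((hr y).1 x).lt_of_ne' (hr0 (x, y))
  have hqX : ∀ x, 0 < ∑ y, qt (x, y) := fun x => sum_pos (fun y _ => hqt (x, y)) univ_nonempty
  have hpost : ∀ y x, 0 < qt (x, y) / ∑ x', qt (x', y) :=
    fun y x => div_pos (hqt (x, y)) (sum_pos (fun x' _ => hqt (x', y)) univ_nonempty)
  rw [sum_coe_mul_elog _ fun z => (div_pos (hrpos _ _) (hqX _)).ne',
    sum_coe_mul_elog _ fun z => (div_pos (hpost _ _) (hqX _)).ne', EReal.coe_le_coe_iff]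
  simp only [log_div (hrpos _ _).ne' (hqX _).ne', log_div (hpost _ _).ne' (hqX _).ne', mul_sub,
    sum_sub_distrib]
  refine sub_le_sub_right ?_ _
  rw [Fintype.sum_prod_type_right, Fintype.sum_prod_type_right]
  exact sum_le_sum fun y _ =>
    sum_mul_log_le_sum_mul_log_div_sum (fun x => hqt (x, y)) (hr y) (hrpos y)

theorem FtildeLP_le_marginal {α : ℝ} (hα : 1 < α) (pYX : X → Y → ℝ) {pX : X → ℝ}
    (hpX : IsPMF pX) (hpXpos : ∀ x, 0 < pX x) {qt : X × Y → ℝ} (hqt : IsPMF qt)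
    (r : Y → X → ℝ) :
    FtildeLP α pYX pX qt r ≤ FtildeLP α pYX (fun x => ∑ y, qt (x, y)) qt r := by
  unfold FtildeLP
  refine add_le_add_right (EReal.coe_le_coe_iff.mpr ?_) _
  rw [klD_self, mul_zero]
  exact mul_nonpos_of_nonpos_of_nonneg (div_nonpos_of_nonneg_of_nonpos (by linarith) (by linarith))
    (klD_nonneg hqt.marginal hpX hpXpos)

theorem FtildeLP_eq_coe_sum [Nonempty Y] (α : ℝ) (pYX : X → Y → ℝ) (pX : X → ℝ)
    {qt : X × Y → ℝ} (hqt : ∀ z, 0 < qt z) {r : Y → X → ℝ} (hr : ∀ y x, 0 < r y x) :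
    FtildeLP α pYX pX qt r = ((∑ z, qt z *
      (α / (1 - α) * log (qt z / ((∑ y, qt (z.1, y)) * pYX z.1 z.2))
        + log (r z.2 z.1 / ∑ y, qt (z.1, y))
        + α / (1 - α) * log ((∑ y, qt (z.1, y)) / pX z.1)) : ℝ) : EReal) := by
  have hqX : ∀ x, 0 < ∑ y, qt (x, y) := fun x => sum_pos (fun y _ => hqt (x, y)) univ_nonempty
  rw [FtildeLP, klD, klD, sum_coe_mul_elog _ fun z => (div_pos (hr _ _) (hqX _)).ne',
    sum_marginal_mul]
  norm_cast
  simp only [mul_add, sum_add_distrib, mul_sum, mul_left_comm]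

end Joint

section Tilted

variable {X Y : Type*} (α : ℝ) (pYX : X → Y → ℝ) (pX : X → ℝ) (r : Y → X → ℝ)

-- `tiltedMarginal` is the paper's `q̂_X` and `tiltedJoint` its `q̂_X q̂_{Y|X}`.
noncomputable def tiltedWeight (x : X) (y : Y) : ℝ :=
  pYX x y * r y x ^ (1 - 1 / α)

theorem tiltedWeight_pos (α : ℝ) {pYX : X → Y → ℝ} {r : Y → X → ℝ} (hpYX : ∀ x y, 0 < pYX x y)
    (hr : ∀ y x, 0 < r y x) (x : X) (y : Y) : 0 < tiltedWeight α pYX r x y :=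
  mul_pos (hpYX x y) (rpow_pos_of_pos (hr y x) _)

theorem sum_tiltedWeight_pos [Fintype Y] [Nonempty Y] (α : ℝ) {pYX : X → Y → ℝ}
    {r : Y → X → ℝ} (hpYX : ∀ x y, 0 < pYX x y) (hr : ∀ y x, 0 < r y x) (x : X) :
    0 < ∑ y, tiltedWeight α pYX r x y :=
  sum_pos (fun y _ => tiltedWeight_pos α hpYX hr x y) univ_nonempty

variable [Fintype X] [Fintype Y]

noncomputable def tiltedPartition : ℝ :=
  ∑ x, pX x ^ (α / (2 * α - 1)) * (∑ y, tiltedWeight α pYX r x y) ^ (α / (2 * α - 1))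

noncomputable def tiltedMarginal (x : X) : ℝ :=
  pX x ^ (α / (2 * α - 1)) * (∑ y, tiltedWeight α pYX r x y) ^ (α / (2 * α - 1)) /
    tiltedPartition α pYX pX r

noncomputable def tiltedJoint (z : X × Y) : ℝ :=
  tiltedMarginal α pYX pX r z.1 * (tiltedWeight α pYX r z.1 z.2 / ∑ y, tiltedWeight α pYX r z.1 y)

variable {pYX pX r} [Nonempty Y]

theorem sum_tiltedJoint (hpYX : ∀ x y, 0 < pYX x y) (hr : ∀ y x, 0 < r y x) (x : X) :
    ∑ y, tiltedJoint α pYX pX r (x, y) = tiltedMarginal α pYX pX r x := by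
  simp only [tiltedJoint, ← mul_sum, ← sum_div, div_self (sum_tiltedWeight_pos α hpYX hr x).ne',
    mul_one]

variable [Nonempty X]

theorem tiltedPartition_pos (hpYX : ∀ x y, 0 < pYX x y) (hpX : ∀ x, 0 < pX x)
    (hr : ∀ y x, 0 < r y x) : 0 < tiltedPartition α pYX pX r :=
  sum_pos (fun x _ => mul_pos (rpow_pos_of_pos (hpX x) _)
    (rpow_pos_of_pos (sum_tiltedWeight_pos α hpYX hr x) _)) univ_nonempty

theorem tiltedMarginal_pos (hpYX : ∀ x y, 0 < pYX x y) (hpX : ∀ x, 0 < pX x)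
    (hr : ∀ y x, 0 < r y x) (x : X) : 0 < tiltedMarginal α pYX pX r x :=
  div_pos (mul_pos (rpow_pos_of_pos (hpX x) _)
    (rpow_pos_of_pos (sum_tiltedWeight_pos α hpYX hr x) _)) (tiltedPartition_pos α hpYX hpX hr)

theorem tiltedJoint_pos (hpYX : ∀ x y, 0 < pYX x y) (hpX : ∀ x, 0 < pX x)
    (hr : ∀ y x, 0 < r y x) (z : X × Y) : 0 < tiltedJoint α pYX pX r z :=
  mul_pos (tiltedMarginal_pos α hpYX hpX hr z.1)
    (div_pos (tiltedWeight_pos α hpYX hr z.1 z.2) (sum_tiltedWeight_pos α hpYX hr z.1))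

theorem isPMF_tiltedMarginal (hpYX : ∀ x y, 0 < pYX x y) (hpX : ∀ x, 0 < pX x)
    (hr : ∀ y x, 0 < r y x) : IsPMF (tiltedMarginal α pYX pX r) :=
  ⟨fun x => (tiltedMarginal_pos α hpYX hpX hr x).le, by
    simp only [tiltedMarginal, ← sum_div]
    exact div_self (tiltedPartition_pos α hpYX hpX hr).ne'⟩

theorem isPMF_tiltedJoint (hpYX : ∀ x y, 0 < pYX x y) (hpX : ∀ x, 0 < pX x)
    (hr : ∀ y x, 0 < r y x) : IsPMF (tiltedJoint α pYX pX r) :=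
  ⟨fun z => (tiltedJoint_pos α hpYX hpX hr z).le, by
    simp only [Fintype.sum_prod_type, sum_tiltedJoint α hpYX hr,
      (isPMF_tiltedMarginal α hpYX hpX hr).2]⟩

theorem log_tiltedMarginal (hpYX : ∀ x y, 0 < pYX x y) (hpX : ∀ x, 0 < pX x)
    (hr : ∀ y x, 0 < r y x) (x : X) :
    log (tiltedMarginal α pYX pX r x) = α / (2 * α - 1) * log (pX x)
      + α / (2 * α - 1) * log (∑ y, tiltedWeight α pYX r x y)
      - log (tiltedPartition α pYX pX r) := by
  have hS := sum_tiltedWeight_pos α hpYX hr x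
  have hpXδ := rpow_pos_of_pos (hpX x) (α / (2 * α - 1))
  have hSδ := rpow_pos_of_pos hS (α / (2 * α - 1))
  rw [tiltedMarginal, log_div (mul_pos hpXδ hSδ).ne' (tiltedPartition_pos α hpYX hpX hr).ne',
    log_mul hpXδ.ne' hSδ.ne', log_rpow (hpX x), log_rpow hS]

theorem log_tiltedJoint (hpYX : ∀ x y, 0 < pYX x y) (hpX : ∀ x, 0 < pX x)
    (hr : ∀ y x, 0 < r y x) (z : X × Y) :
    log (tiltedJoint α pYX pX r z) = log (tiltedMarginal α pYX pX r z.1) + log (pYX z.1 z.2)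
      + (1 - 1 / α) * log (r z.2 z.1) - log (∑ y, tiltedWeight α pYX r z.1 y) := by
  have hS := sum_tiltedWeight_pos α hpYX hr z.1
  have hw := tiltedWeight_pos α hpYX hr z.1 z.2
  rw [tiltedJoint, log_mul (tiltedMarginal_pos α hpYX hpX hr z.1).ne' (div_pos hw hS).ne',
    log_div hw.ne' hS.ne', tiltedWeight, log_mul (hpYX _ _).ne' (rpow_pos_of_pos (hr _ _) _).ne',
    log_rpow (hr _ _)]
  ring

end Tilted

section TiltedMax

variable {X Y : Type*} [Fintype X] [Fintype Y] [Nonempty X] [Nonempty Y]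
  {α : ℝ} {pYX : X → Y → ℝ} {pX : X → ℝ} {r : Y → X → ℝ}

theorem FtildeLP_eq_log_tiltedPartition_sub_klD (hα0 : α ≠ 0) (hα1 : α ≠ 1)
    (hα2 : 2 * α - 1 ≠ 0) (hpYX : ∀ x y, 0 < pYX x y) (hpX : ∀ x, 0 < pX x)
    (hr : ∀ y x, 0 < r y x) {qt : X × Y → ℝ} (hqt1 : ∑ z, qt z = 1) (hqt : ∀ z, 0 < qt z) :
    FtildeLP α pYX pX qt r = (((1 - α / (1 - α)) * log (tiltedPartition α pYX pX r)
      + α / (1 - α) * klD qt (tiltedJoint α pYX pX r)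
      - klD (fun x => ∑ y, qt (x, y)) (tiltedMarginal α pYX pX r) : ℝ) : EReal) := by
  have hqX : ∀ x, 0 < ∑ y, qt (x, y) := fun x => sum_pos (fun y _ => hqt (x, y)) univ_nonempty
  have hα1' : 1 - α ≠ 0 := sub_ne_zero.mpr hα1.symm
  have hγ : α / (1 - α) * (1 - 1 / α) = -1 := by
    field_simp
    ring
  have hδ : α / (2 * α - 1) * (1 - α / (1 - α)) = -(α / (1 - α)) := by
    rw [one_sub_div hα1', div_mul_div_comm, div_eq_iff (mul_ne_zero hα2 hα1')]
    field_simp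
    ring
  set c := α / (1 - α)
  have point : ∀ z : X × Y,
      c * log (qt z / ((∑ y, qt (z.1, y)) * pYX z.1 z.2)) + log (r z.2 z.1 / ∑ y, qt (z.1, y))
        + c * log ((∑ y, qt (z.1, y)) / pX z.1)
      = (1 - c) * log (tiltedPartition α pYX pX r) + c * log (qt z / tiltedJoint α pYX pX r z)
        - log ((∑ y, qt (z.1, y)) / tiltedMarginal α pYX pX r z.1) := by
    intro z
    rw [log_div (hqt z).ne' (mul_pos (hqX _) (hpYX _ _)).ne', log_mul (hqX _).ne' (hpYX _ _).ne',
      log_div (hr _ _).ne' (hqX _).ne', log_div (hqX _).ne' (hpX _).ne',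
      log_div (hqt z).ne' (tiltedJoint_pos α hpYX hpX hr z).ne',
      log_div (hqX _).ne' (tiltedMarginal_pos α hpYX hpX hr _).ne', log_tiltedJoint α hpYX hpX hr,
      log_tiltedMarginal α hpYX hpX hr]
    linear_combination log (r z.2 z.1) * hγ
      - (log (pX z.1) + log (∑ y, tiltedWeight α pYX r z.1 y)) * hδ
  rw [FtildeLP_eq_coe_sum α pYX pX hqt hr, sum_congr rfl fun z _ => by rw [point z], klD, klD,
    sum_marginal_mul]
  simp only [mul_add, mul_sub, sum_add_distrib, sum_sub_distrib, ← sum_mul, hqt1, one_mul,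
    mul_left_comm (qt _) c, ← mul_sum]

theorem FtildeLP_le_tiltedJoint (hα : 1 < α) (hpYX : ∀ x y, 0 < pYX x y) (hpX : ∀ x, 0 < pX x)
    (hr : ∀ y x, 0 < r y x) {qt : X × Y → ℝ} (hqt : IsPMF qt) (hqtpos : ∀ z, 0 < qt z) :
    FtildeLP α pYX pX qt r ≤ FtildeLP α pYX pX (tiltedJoint α pYX pX r) r := by
  have hα0 : α ≠ 0 := (zero_lt_one.trans hα).ne'
  have hα2 : 2 * α - 1 ≠ 0 := by linarith
  have hqhat : IsPMF (tiltedJoint α pYX pX r) := isPMF_tiltedJoint α hpYX hpX hr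
  have hmarg : (fun x => ∑ y, tiltedJoint α pYX pX r (x, y)) = tiltedMarginal α pYX pX r :=
    funext (sum_tiltedJoint α hpYX hr)
  rw [FtildeLP_eq_log_tiltedPartition_sub_klD hα0 hα.ne' hα2 hpYX hpX hr hqt.2 hqtpos,
    FtildeLP_eq_log_tiltedPartition_sub_klD hα0 hα.ne' hα2 hpYX hpX hr hqhat.2
      (tiltedJoint_pos α hpYX hpX hr), hmarg, klD_self, klD_self, EReal.coe_le_coe_iff]
  have hjoint := mul_nonpos_of_nonpos_of_nonneg
    (div_nonpos_of_nonneg_of_nonpos (by linarith : 0 ≤ α) (by linarith : 1 - α ≤ 0))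
    (klD_nonneg hqt hqhat (tiltedJoint_pos α hpYX hpX hr))
  have hmarginal := klD_nonneg hqt.marginal (isPMF_tiltedMarginal α hpYX hpX hr)
    (tiltedMarginal_pos α hpYX hpX hr)
  linarith

end TiltedMax

theorem FtildeLP_max_updates_three_general {X Y : Type*} [Fintype X] [Fintype Y]
    [Nonempty X] [Nonempty Y]
    (α : ℝ) (hα : 1 < α)
    (pYX : X → Y → ℝ) (hpYXpos : ∀ x y, 0 < pYX x y) :
    (∀ pX : X → ℝ, IsPMF pX → (∀ x, 0 < pX x) →
      ∀ qt : X × Y → ℝ, IsPMF qt → (∀ z, 0 < qt z) →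
      ∀ r : Y → X → ℝ, (∀ y, IsPMF (r y)) →
        FtildeLP α pYX pX qt r ≤
        FtildeLP α pYX pX qt (fun y x => qt (x, y) / ∑ x', qt (x', y))) ∧
    (∀ qt : X × Y → ℝ, IsPMF qt → (∀ z, 0 < qt z) →
      ∀ r : Y → X → ℝ, (∀ y, IsPMF (r y)) → (∀ y x, 0 < r y x) →
      ∀ pX : X → ℝ, IsPMF pX → (∀ x, 0 < pX x) →
        FtildeLP α pYX pX qt r ≤
        FtildeLP α pYX (fun x => ∑ y, qt (x, y)) qt r) ∧
    (∀ pX : X → ℝ, IsPMF pX → (∀ x, 0 < pX x) →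
      ∀ r : Y → X → ℝ, (∀ y, IsPMF (r y)) → (∀ y x, 0 < r y x) →
      ∀ qt : X × Y → ℝ, IsPMF qt → (∀ z, 0 < qt z) →
        FtildeLP α pYX pX qt r ≤
        FtildeLP α pYX pX
          (fun z : X × Y =>
            (pX z.1 ^ (α / (2 * α - 1)) *
                (∑ y, pYX z.1 y * r y z.1 ^ (1 - 1 / α)) ^ (α / (2 * α - 1)) /
              ∑ x', pX x' ^ (α / (2 * α - 1)) *
                (∑ y, pYX x' y * r y x' ^ (1 - 1 / α)) ^ (α / (2 * α - 1))) *
            (pYX z.1 z.2 * r z.2 z.1 ^ (1 - 1 / α) /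
              ∑ y', pYX z.1 y' * r y' z.1 ^ (1 - 1 / α))) r) :=
  ⟨fun pX _ _ _ _ hqtpos _ hr => FtildeLP_le_posterior α pYX pX hqtpos hr,
    fun _ hqt _ r _ _ _ hpX hpXpos => FtildeLP_le_marginal hα pYX hpX hpXpos hqt r,
    fun _ _ hpXpos _ _ hrpos _ hqt hqtpos =>
      FtildeLP_le_tiltedJoint hα hpYXpos hpXpos hrpos hqt hqtpos⟩

/-- Alternating-maximization updating formulae for `F̃_α^{LP}(p_X, q̃_{X,Y}, r_{X|Y})`
when `α > 1`: (1) for fixed `(p_X, q̃_{X,Y})`, the maximizing reverse channel is the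
posterior of `q̃_{X,Y}`; (2) for fixed `(q̃_{X,Y}, r_{X|Y})` with `r` strictly positive,
the maximizing strictly positive `p_X` is the `X`-marginal of `q̃_{X,Y}`; (3) for fixed
`(p_X, r_{X|Y})` with `r` strictly positive, the maximizing strictly positive `q̃_{X,Y}`
is the product `q̂_X q̂_{Y|X}` of the stated tilted distributions. -/
theorem FtildeLP_max_updates_three {X Y : Type*} [Fintype X] [Fintype Y]
    [Nonempty X] [Nonempty Y]
    (α : ℝ) (hα : 1 < α)
    (pYX : X → Y → ℝ) (hpYX : ∀ x, IsPMF (pYX x)) (hpYXpos : ∀ x y, 0 < pYX x y) :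
    (∀ pX : X → ℝ, IsPMF pX → (∀ x, 0 < pX x) →
      ∀ qt : X × Y → ℝ, IsPMF qt → (∀ z, 0 < qt z) →
      ∀ r : Y → X → ℝ, (∀ y, IsPMF (r y)) →
        FtildeLP α pYX pX qt r ≤
        FtildeLP α pYX pX qt (fun y x => qt (x, y) / ∑ x', qt (x', y))) ∧
    (∀ qt : X × Y → ℝ, IsPMF qt → (∀ z, 0 < qt z) →
      ∀ r : Y → X → ℝ, (∀ y, IsPMF (r y)) → (∀ y x, 0 < r y x) →
      ∀ pX : X → ℝ, IsPMF pX → (∀ x, 0 < pX x) →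
        FtildeLP α pYX pX qt r ≤
        FtildeLP α pYX (fun x => ∑ y, qt (x, y)) qt r) ∧
    (∀ pX : X → ℝ, IsPMF pX → (∀ x, 0 < pX x) →
      ∀ r : Y → X → ℝ, (∀ y, IsPMF (r y)) → (∀ y x, 0 < r y x) →
      ∀ qt : X × Y → ℝ, IsPMF qt → (∀ z, 0 < qt z) →
        FtildeLP α pYX pX qt r ≤
        FtildeLP α pYX pX
          (fun z : X × Y =>
            (pX z.1 ^ (α / (2 * α - 1)) *
                (∑ y, pYX z.1 y * r y z.1 ^ (1 - 1 / α)) ^ (α / (2 * α - 1)) /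
              ∑ x', pX x' ^ (α / (2 * α - 1)) *
                (∑ y, pYX x' y * r y x' ^ (1 - 1 / α)) ^ (α / (2 * α - 1))) *
            (pYX z.1 z.2 * r z.2 z.1 ^ (1 - 1 / α) /
              ∑ y', pYX z.1 y' * r y' z.1 ^ (1 - 1 / α))) r) :=
  FtildeLP_max_updates_three_general α hα pYX hpYXpos
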